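/- arXiv:2206.13496 — 6 statements merged into one kernel-verified Lean document; each statement's English description precedes it below -/
import Mathlib

section
/- Fix a start time x and let E(x) be the greedy earliest schedule (E_1 = x, E_i = max(e_i, E_{i−1} + t_{i−1})). Then E(x) minimizes the total waiting time among all feasible schedules A with A_1 = x: if A is feasible with A_1 = x, then ∑_{i≥2} Δ_i(E(x)) ≤ ∑_{i≥2} Δ_i(A), where Δ_i(B) = B_i − B_{i−1} − t_{i−1}. -/
/-- A fragment has nodes `1,…,m` with time windows `[e i, l i]` and durations
`t i` on arc `(i, i+1)`.  A schedule `A` is feasible if it respects all time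
windows and consecutive arc durations. -/
def Feasible (m : ℕ) (e l t A : ℕ → ℝ) : Prop :=
  (∀ i, 1 ≤ i → i ≤ m → e i ≤ A i ∧ A i ≤ l i) ∧
  ∀ i, 2 ≤ i → i ≤ m → A (i - 1) + t (i - 1) ≤ A i

lemma tel (f : ℕ → ℝ) : ∀ m, 1 ≤ m →
    ∑ i ∈ Finset.Icc 2 m, (f i - f (i - 1)) = f m - f 1 := by
  intro m hm
  induction m, hm using Nat.le_induction with
  | base => simp
  | succ n hn ih =>
    rw [Finset.sum_Icc_succ_top (by omega), ih]
    simp only [Nat.add_sub_cancel]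
    ring

/-- The greedy earliest schedule minimizes total waiting time among feasible
schedules with the same start time. -/
theorem stmt5 (m : ℕ) (e l t : ℕ → ℝ) (x : ℝ) (E : ℕ → ℝ)
    (hE1 : E 1 = x)
    (hErec : ∀ i, 2 ≤ i → i ≤ m → E i = max (e i) (E (i - 1) + t (i - 1)))
    (hEfeas : Feasible m e l t E) :
    ∀ A : ℕ → ℝ, Feasible m e l t A → A 1 = x →
      ∑ i ∈ Finset.Icc 2 m, (E i - (E (i - 1) + t (i - 1))) ≤
        ∑ i ∈ Finset.Icc 2 m, (A i - (A (i - 1) + t (i - 1))) := by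
  intro A hA hA1
  rcases Nat.lt_or_ge m 2 with hm | hm
  · rw [Finset.Icc_eq_empty (by omega)]; simp
  have hmin : ∀ i, 1 ≤ i → i ≤ m → E i ≤ A i := by
    intro i hi
    induction i, hi using Nat.le_induction with
    | base => intro _; rw [hE1, hA1]
    | succ n hn ih =>
      intro hnm
      rw [hErec (n+1) (by omega) hnm]
      have h1 : e (n+1) ≤ A (n+1) := (hA.1 (n+1) (by omega) hnm).1
      have h2 : A n + t n ≤ A (n+1) := by
        have := hA.2 (n+1) (by omega) hnm
        simpa using this
      have h3 : E n ≤ A n := ih (by omega)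
      simp only [Nat.add_sub_cancel]
      exact max_le h1 (by linarith)
  have key : ∀ B : ℕ → ℝ, B 1 = x →
      ∑ i ∈ Finset.Icc 2 m, (B i - (B (i - 1) + t (i - 1))) =
        B m - x - ∑ i ∈ Finset.Icc 2 m, t (i - 1) := by
    intro B hB1
    have : ∀ i ∈ Finset.Icc 2 m, B i - (B (i - 1) + t (i - 1)) =
        (B i - B (i - 1)) - t (i - 1) := by intro i _; ring
    rw [Finset.sum_congr rfl this, Finset.sum_sub_distrib,
      tel B m (by omega), hB1]
  rw [key E hE1, key A hA1]
  have := hmin m (by omega) le_rfl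
  linarith
end

section
/- Fix weights w_i ≥ 1 for 2 ≤ i ≤ m (the vehicle loads). For a feasible schedule A define the weighted cost C(A) = ∑_{i=2}^{m} w_i · (A_i − A_{i−1} − t_{i−1}). Let B be a feasible schedule that is pointwise maximal (B_i ≥ A_i for every feasible A and all i) and constructed so that the waiting in B can only occur where forced (B_i = max(e_i, B_{i−1} + t_{i−1}) for i ≥ 2). Suppose there exists a node v with B_v − (B_{v−1} + t_{v−1}) > 0. Then every minimizer A of C over feasible schedules satisfies A_1 = B_1. -/
/-- If the latest (pointwise-maximal, waiting-only-when-forced) schedule B has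
positive waiting somewhere, then every minimizer of the load-weighted waiting
cost starts at B 1. -/
theorem stmt9 (m : ℕ) (hm : 1 ≤ m) (e l t B w : ℕ → ℝ)
    (hw : ∀ i, 2 ≤ i → i ≤ m → 1 ≤ w i)
    (hB : Feasible m e l t B)
    (hBmax : ∀ A : ℕ → ℝ, Feasible m e l t A →
      ∀ i, 1 ≤ i → i ≤ m → A i ≤ B i)
    (hBrec : ∀ i, 2 ≤ i → i ≤ m → B i = max (e i) (B (i - 1) + t (i - 1)))
    (hv : ∃ v, 2 ≤ v ∧ v ≤ m ∧ 0 < B v - (B (v - 1) + t (v - 1))) :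
    ∀ A : ℕ → ℝ, Feasible m e l t A →
      (∀ A' : ℕ → ℝ, Feasible m e l t A' →
        ∑ i ∈ Finset.Icc 2 m, w i * (A i - (A (i - 1) + t (i - 1))) ≤
          ∑ i ∈ Finset.Icc 2 m, w i * (A' i - (A' (i - 1) + t (i - 1)))) →
      A 1 = B 1 := by
  intro A hA hmin
  by_contra hne
  have hA1 : A 1 ≤ B 1 := hBmax A hA 1 le_rfl hm
  have hlt : A 1 < B 1 := lt_of_le_of_ne hA1 hne
  obtain ⟨v, hv2, hvm, hvpos⟩ := hv
  have hBv : B v = e v := by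
    have h := hBrec v hv2 hvm
    rcases max_choice (e v) (B (v - 1) + t (v - 1)) with hc | hc
    · rw [h, hc]
    · rw [h] at hvpos; rw [hc] at hvpos; linarith
  have hAv : A v = B v := by
    have h1 := (hA.1 v (by omega) hvm).1
    have h2 := hBmax A hA v (by omega) hvm
    rw [hBv]
    rw [hBv] at h2
    linarith
  -- the largest j in [1, v-1] with A j < B j
  set S : Finset ℕ := (Finset.Icc 1 (v - 1)).filter (fun j => A j < B j) with hS
  have h1S : (1 : ℕ) ∈ S :=
    Finset.mem_filter.mpr ⟨Finset.mem_Icc.mpr ⟨le_rfl, by omega⟩, hlt⟩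
  have hSne : S.Nonempty := ⟨1, h1S⟩
  set j := S.max' hSne with hj
  have hjS : j ∈ S := S.max'_mem hSne
  have hjIcc := (Finset.mem_filter.mp hjS).1
  have hjlt : A j < B j := (Finset.mem_filter.mp hjS).2
  have hj1 : 1 ≤ j := (Finset.mem_Icc.mp hjIcc).1
  have hjv : j ≤ v - 1 := (Finset.mem_Icc.mp hjIcc).2
  have hjmax : ∀ k, 1 ≤ k → k ≤ v - 1 → A k < B k → k ≤ j := by
    intro k hk1 hk2 hk
    exact S.le_max' k (Finset.mem_filter.mpr ⟨Finset.mem_Icc.mpr ⟨hk1, hk2⟩, hk⟩)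
  set A' : ℕ → ℝ := fun n => if n ≤ v - 1 then B n else A n with hA'
  have hA'feas : Feasible m e l t A' := by
    constructor
    · intro i hi1 him
      simp only [hA']
      split_ifs with h
      · exact hB.1 i hi1 him
      · exact hA.1 i hi1 him
    · intro i hi2 him
      simp only [hA']
      by_cases h1 : i ≤ v - 1
      · rw [if_pos h1, if_pos (by omega : i - 1 ≤ v - 1)]
        exact hB.2 i hi2 him
      · rw [if_neg h1]
        by_cases h2 : i - 1 ≤ v - 1
        · rw [if_pos h2]
          have hiv : i = v := by omega
          subst hiv
          rw [hAv, hBv]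
          rw [hBv] at hvpos
          linarith
        · rw [if_neg h2]
          exact hA.2 i hi2 him
  have key : ∑ i ∈ Finset.Icc 2 m, w i * (A' i - (A' (i - 1) + t (i - 1))) <
      ∑ i ∈ Finset.Icc 2 m, w i * (A i - (A (i - 1) + t (i - 1))) := by
    apply Finset.sum_lt_sum
    · intro i hi
      rw [Finset.mem_Icc] at hi
      have hwi := hw i hi.1 hi.2
      have hw0 : (0 : ℝ) ≤ w i := by linarith
      apply mul_le_mul_of_nonneg_left _ hw0
      simp only [hA']
      by_cases h1 : i ≤ v - 1
      · rw [if_pos h1, if_pos (by omega : i - 1 ≤ v - 1)]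
        have hAi := hBmax A hA i (by omega) hi.2
        have hAi1 := hBmax A hA (i - 1) (by omega) (by omega)
        rcases max_choice (e i) (B (i - 1) + t (i - 1)) with hc | hc
        · have hBi : B i = e i := by rw [hBrec i hi.1 hi.2, hc]
          have hei : e i ≤ A i := (hA.1 i (by omega) hi.2).1
          rw [hBi]
          linarith
        · have hBi : B i = B (i - 1) + t (i - 1) := by
            rw [hBrec i hi.1 hi.2, hc]
          have := hA.2 i hi.1 hi.2
          rw [hBi]
          linarith
      · rw [if_neg h1]
        by_cases h2 : i - 1 ≤ v - 1
        · rw [if_pos h2]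
          have hAi1 := hBmax A hA (i - 1) (by omega) (by omega)
          linarith
        · rw [if_neg h2]
    · refine ⟨j + 1, Finset.mem_Icc.mpr ⟨by omega, by omega⟩, ?_⟩
      have hwi := hw (j + 1) (by omega) (by omega)
      apply mul_lt_mul_of_pos_left _ (by linarith : (0 : ℝ) < w (j + 1))
      simp only [hA']
      have hjj : j + 1 - 1 = j := by omega
      rw [hjj, if_pos (by omega : j ≤ v - 1)]
      by_cases h1 : j + 1 ≤ v - 1
      · rw [if_pos h1]
        have hnot : ¬ A (j + 1) < B (j + 1) := fun hc => by
          have := hjmax (j + 1) (by omega) h1 hc; omega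
        push_neg at hnot
        linarith
      · rw [if_neg h1]
        linarith
  have := hmin A' hA'feas
  linarith
end

section
/- Fix weights w_i ≥ 1 for 2 ≤ i ≤ m. Let B be the pointwise-maximal feasible schedule with B_i = max(e_i, B_{i−1} + t_{i−1}) for i ≥ 2, and suppose there exists a node v with positive waiting in B, i.e., B_v > B_{v−1} + t_{v−1}. Then every minimizer A of the weighted waiting cost C(A) = ∑_{i=2}^{m} w_i (A_i − A_{i−1} − t_{i−1}) over feasible schedules also satisfies A_m = B_m (in addition to A_1 = B_1). -/
/-- Any feasible schedule agrees with `B` from a waiting node onwards. -/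
lemma tail_eq (m v : ℕ) (e l t B A : ℕ → ℝ) (hv2 : 2 ≤ v) (hvm : v ≤ m)
    (hBrec : ∀ i, 2 ≤ i → i ≤ m → B i = max (e i) (B (i - 1) + t (i - 1)))
    (hBv : B v = e v)
    (hA : Feasible m e l t A)
    (hAle : ∀ i, 1 ≤ i → i ≤ m → A i ≤ B i) :
    ∀ k, v ≤ k → k ≤ m → A k = B k := by
  intro k hk
  induction k, hk using Nat.le_induction with
  | base =>
    intro hvm'
    have h1 := (hA.1 v (by omega) hvm').1
    have h2 := hAle v (by omega) hvm'
    rw [hBv] at h2 ⊢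
    linarith
  | succ k hk IH =>
    intro hk1m
    have hkm : k ≤ m := by omega
    have hAk := IH hkm
    have h2 : 2 ≤ k + 1 := by omega
    have hr := hBrec (k + 1) h2 hk1m
    simp only [Nat.add_sub_cancel] at hr
    have hfe := (hA.1 (k + 1) (by omega) hk1m).1
    have hfa := hA.2 (k + 1) h2 hk1m
    simp only [Nat.add_sub_cancel] at hfa
    have hge : B (k + 1) ≤ A (k + 1) := by
      rw [hr]
      exact max_le hfe (by rw [← hAk]; exact hfa)
    have hle := hAle (k + 1) (by omega) hk1m
    linarith

/-- If the latest (pointwise-maximal, waiting-only-when-forced) schedule B has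
positive waiting somewhere, then every minimizer of the load-weighted waiting
cost ends at B m (in addition to starting at B 1). -/
theorem stmt10 (m : ℕ) (hm : 1 ≤ m) (e l t B w : ℕ → ℝ)
    (hw : ∀ i, 2 ≤ i → i ≤ m → 1 ≤ w i)
    (hB : Feasible m e l t B)
    (hBmax : ∀ A : ℕ → ℝ, Feasible m e l t A →
      ∀ i, 1 ≤ i → i ≤ m → A i ≤ B i)
    (hBrec : ∀ i, 2 ≤ i → i ≤ m → B i = max (e i) (B (i - 1) + t (i - 1)))
    (hv : ∃ v, 2 ≤ v ∧ v ≤ m ∧ B (v - 1) + t (v - 1) < B v) :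
    ∀ A : ℕ → ℝ, Feasible m e l t A →
      (∀ A' : ℕ → ℝ, Feasible m e l t A' →
        ∑ i ∈ Finset.Icc 2 m, w i * (A i - (A (i - 1) + t (i - 1))) ≤
          ∑ i ∈ Finset.Icc 2 m, w i * (A' i - (A' (i - 1) + t (i - 1)))) →
      A m = B m ∧ A 1 = B 1 := by
  obtain ⟨v, hv2, hvm, hvw⟩ := hv
  intro A hA hmin
  -- B v = e v
  have hBv : B v = e v := by
    rcases le_total (e v) (B (v - 1) + t (v - 1)) with h | h
    · rw [hBrec v hv2 hvm, max_eq_right h] at hvw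
      exact absurd hvw (lt_irrefl _)
    · rw [hBrec v hv2 hvm, max_eq_left h]
  have htail := tail_eq m v e l t B A hv2 hvm hBrec hBv hA (hBmax A hA)
  have hAm : A m = B m := htail m hvm le_rfl
  refine ⟨hAm, ?_⟩
  -- Now A 1 = B 1 via minimality
  by_contra h1
  have h1lt : A 1 < B 1 := lt_of_le_of_ne (hBmax A hA 1 le_rfl hm) h1
  -- j : smallest index in [1,m] with A j = B j
  set S : Finset ℕ := (Finset.Icc 1 m).filter (fun i => A i = B i) with hS
  have hvS : v ∈ S := by
    simp only [hS, Finset.mem_filter, Finset.mem_Icc]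
    exact ⟨⟨by omega, hvm⟩, htail v le_rfl hvm⟩
  have hSne : S.Nonempty := ⟨v, hvS⟩
  set j := S.min' hSne with hj
  have hjS : j ∈ S := S.min'_mem hSne
  have hjIcc : 1 ≤ j ∧ j ≤ m ∧ A j = B j := by
    have := hjS
    simp only [hS, Finset.mem_filter, Finset.mem_Icc] at this
    exact ⟨this.1.1, this.1.2, this.2⟩
  have hjlt : ∀ i, 1 ≤ i → i < j → A i < B i := by
    intro i h1i hij
    rcases lt_or_eq_of_le (hBmax A hA i h1i (by omega)) with h | h
    · exact h
    · exfalso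
      have hiS : i ∈ S := by
        simp only [hS, Finset.mem_filter, Finset.mem_Icc]
        exact ⟨⟨h1i, by omega⟩, h⟩
      have := S.min'_le i hiS
      omega
  have hj2 : 2 ≤ j := by
    rcases Nat.lt_or_ge j 2 with h | h
    · exfalso
      have : j = 1 := by omega
      rw [this] at hjIcc
      exact h1 hjIcc.2.2
    · exact h
  -- δ : minimal slack on the prefix
  have hIne : (Finset.Icc 1 (j - 1)).Nonempty := Finset.nonempty_Icc.mpr (by omega)
  set δ := (Finset.Icc 1 (j - 1)).inf' hIne (fun i => B i - A i) with hδ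
  have hδpos : 0 < δ := by
    rw [hδ, Finset.lt_inf'_iff]
    intro i hi
    simp only [Finset.mem_Icc] at hi
    have := hjlt i hi.1 (by omega)
    linarith
  have hδle : ∀ i, 1 ≤ i → i < j → δ ≤ B i - A i := by
    intro i h1i hij
    exact Finset.inf'_le _ (by simp only [Finset.mem_Icc]; omega)
  -- the shifted schedule
  set A' : ℕ → ℝ := fun i => A i + (if i < j then δ else 0) with hA'
  have hA'feas : Feasible m e l t A' := by
    constructor
    · intro i h1i him
      by_cases hij : i < j
      · simp only [hA', if_pos hij]
        have hs := hδle i h1i hij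
        have hw1 := (hA.1 i h1i him).1
        have hw2 := (hB.1 i h1i him).2
        constructor <;> linarith
      · simp only [hA', if_neg hij, add_zero]
        exact hA.1 i h1i him
    · intro i h2i him
      have hfa := hA.2 i h2i him
      rcases lt_trichotomy i j with hij | hij | hij
      · have h1 : i - 1 < j := by omega
        simp only [hA', if_pos hij, if_pos h1]
        linarith
      · have h1 : i - 1 < j := by omega
        have h2 : ¬ i < j := by omega
        simp only [hA', if_pos h1, if_neg h2, add_zero]
        have hs := hδle (i - 1) (by omega) (by omega)
        have hBarc := hB.2 i h2i him
        have : A i = B i := by rw [hij]; exact hjIcc.2.2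
        linarith
      · have h1 : ¬ i - 1 < j := by omega
        have h2 : ¬ i < j := by omega
        simp only [hA', if_neg h1, if_neg h2, add_zero]
        exact hfa
  -- cost comparison
  have hcost : ∑ i ∈ Finset.Icc 2 m, w i * (A' i - (A' (i - 1) + t (i - 1))) =
      (∑ i ∈ Finset.Icc 2 m, w i * (A i - (A (i - 1) + t (i - 1)))) +
        ∑ i ∈ Finset.Icc 2 m,
          w i * ((if i < j then δ else 0) - (if i - 1 < j then δ else 0)) := by
    rw [← Finset.sum_add_distrib]
    apply Finset.sum_congr rfl
    intro i _
    simp only [hA']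
    ring
  have hkey : ∑ i ∈ Finset.Icc 2 m,
      w i * ((if i < j then δ else 0) - (if i - 1 < j then δ else 0)) = -(w j * δ) := by
    rw [Finset.sum_eq_single_of_mem j (by simp only [Finset.mem_Icc]; omega)]
    · have h1 : ¬ j < j := lt_irrefl j
      have h2 : j - 1 < j := by omega
      simp only [if_neg h1, if_pos h2]
      ring
    · intro i hi hne
      simp only [Finset.mem_Icc] at hi
      rcases lt_or_gt_of_ne hne with h | h
      · have h1 : i - 1 < j := by omega
        simp only [if_pos h, if_pos h1, sub_self, mul_zero]
      · have h1 : ¬ i - 1 < j := by omega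
        have h2 : ¬ i < j := by omega
        simp only [if_neg h1, if_neg h2, sub_self, mul_zero]
  have hmin' := hmin A' hA'feas
  rw [hcost, hkey] at hmin'
  have hwj : 1 ≤ w j := hw j hj2 hjIcc.2.1
  nlinarith
end

section
/- Let B^l be a pointwise-maximal feasible schedule on a fragment of m nodes with B^l_i = max(e_i, B^l_{i−1} + t_{i−1}) for i ≥ 2, and suppose B^l has positive waiting at some node. Then for every feasible schedule A one has A_1 ≤ B^l_1 and B^l_m ≤ A_m; i.e., the choice δ = 0 works in the statement 'there exists 0 ≤ δ ≤ B^l_1 − B^e_1 with A_1 ≤ B^l_1 − δ and B^l_m − δ ≤ A_m'. -/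
/-- Lemma 1 ('claim'), positive-waiting case: if the pointwise-maximal greedy
schedule Bl has positive waiting somewhere, then δ = 0 works: every feasible A
satisfies A 1 ≤ Bl 1 and Bl m ≤ A m. -/
theorem stmt12 (m : ℕ) (hm : 1 ≤ m) (e l t Bl : ℕ → ℝ)
    (hBl : Feasible m e l t Bl)
    (hBlmax : ∀ A : ℕ → ℝ, Feasible m e l t A →
      ∀ i, 1 ≤ i → i ≤ m → A i ≤ Bl i)
    (hBlrec : ∀ i, 2 ≤ i → i ≤ m → Bl i = max (e i) (Bl (i - 1) + t (i - 1)))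
    (hv : ∃ v, 2 ≤ v ∧ v ≤ m ∧ Bl (v - 1) + t (v - 1) < Bl v) :
    ∀ A : ℕ → ℝ, Feasible m e l t A → A 1 ≤ Bl 1 ∧ Bl m ≤ A m := by
  intro A hA
  refine ⟨hBlmax A hA 1 le_rfl hm, ?_⟩
  obtain ⟨v, hv2, hvm, hwait⟩ := hv
  have hBlv : Bl v = e v := by
    have h := hBlrec v hv2 hvm
    rcases max_cases (e v) (Bl (v - 1) + t (v - 1)) with ⟨h1, _⟩ | ⟨h1, _⟩
    · rw [h, h1]
    · rw [h, h1] at hwait; exact absurd hwait (lt_irrefl _)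
  have key : ∀ k, v + k ≤ m → Bl (v + k) ≤ A (v + k) := by
    intro k
    induction k with
    | zero =>
      intro h
      simpa [hBlv] using (hA.1 v (by omega) (by simpa using h)).1
    | succ n ih =>
      intro h
      have h1v : v + n ≤ m := by omega
      have h2 : 2 ≤ v + n + 1 := by omega
      have hrec := hBlrec (v + n + 1) h2 (by omega)
      have hsub : v + n + 1 - 1 = v + n := by omega
      rw [hsub] at hrec
      have he : e (v + n + 1) ≤ A (v + n + 1) :=
        (hA.1 (v + n + 1) (by omega) (by omega)).1
      have harc := hA.2 (v + n + 1) h2 (by omega)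
      rw [hsub] at harc
      have : Bl (v + n) + t (v + n) ≤ A (v + n + 1) :=
        le_trans (by linarith [ih h1v]) harc
      calc Bl (v + n + 1) = max (e (v + n + 1)) (Bl (v + n) + t (v + n)) := hrec
        _ ≤ A (v + n + 1) := max_le he this
  have := key (m - v) (by omega)
  have hmv : v + (m - v) = m := by omega
  rwa [hmv] at this
end

section
/- Conversely to the dominance sufficiency: with tMin_1 ≤ tMax_1, tMin_2 ≤ tMax_2 and tMin_1 ≤ tMin_2, if for every T_2 ∈ [tMin_2, tMax_2] there exists T_1 ∈ [tMin_1, min(T_2, tMax_1)] with rtMax_1 − (T_1 − tMin_1) ≤ rtMax_2 − (T_2 − tMin_2), then both inequalities hold: rtMax_1 − (tMax_1 − tMin_1) ≤ rtMax_2 − (tMax_2 − tMin_2) and rtMax_1 − (tMax_2 − tMin_1) ≤ rtMax_2. -/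
/-- Necessity of the algebraic dominance conditions of the labeling
algorithm. -/
theorem stmt14 (tMin1 tMax1 tMin2 tMax2 rtMax1 rtMax2 : ℝ)
    (h1 : tMin1 ≤ tMax1) (h2 : tMin2 ≤ tMax2) (h12 : tMin1 ≤ tMin2)
    (h : ∀ T2 : ℝ, tMin2 ≤ T2 → T2 ≤ tMax2 →
      ∃ T1 : ℝ, tMin1 ≤ T1 ∧ T1 ≤ min T2 tMax1 ∧
        rtMax1 - (T1 - tMin1) ≤ rtMax2 - (T2 - tMin2)) :
    rtMax1 - (tMax1 - tMin1) ≤ rtMax2 - (tMax2 - tMin2) ∧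
      rtMax1 - (tMax2 - tMin1) ≤ rtMax2 := by
  obtain ⟨T1, hT1, hT1', hle⟩ := h tMax2 h2 le_rfl
  rw [le_min_iff] at hT1'
  constructor <;> nlinarith [hT1'.1, hT1'.2]
end

section
/- Let B^l be the pointwise-maximal feasible schedule on a fragment and set B^e_i = B^l_i − δ* with δ* = min_j (B^l_j − e_j). Then B^e is the pointwise-minimal schedule among all feasible schedules having the same waiting-time vector as B^l: for every feasible schedule A with A_i − A_{i−1} = B^l_i − B^l_{i−1} for all i ≥ 2, one has B^e_i ≤ A_i ≤ B^l_i for all i, and every such A equals B^l − δ for some 0 ≤ δ ≤ δ*. -/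
/-- B^e = B^l - δ* is pointwise minimal among feasible schedules with the same
waiting-time vector as B^l, and every such schedule is a uniform backward
shift of B^l by some δ ∈ [0, δ*]. -/
theorem stmt18 (m : ℕ) (hm : 1 ≤ m) (e l t Bl : ℕ → ℝ)
    (hBl : Feasible m e l t Bl)
    (hBlmax : ∀ A : ℕ → ℝ, Feasible m e l t A →
      ∀ i, 1 ≤ i → i ≤ m → A i ≤ Bl i)
    (δstar : ℝ)
    (hδ1 : ∀ i, 1 ≤ i → i ≤ m → δstar ≤ Bl i - e i)
    (hδ2 : ∃ i, 1 ≤ i ∧ i ≤ m ∧ δstar = Bl i - e i) :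
    ∀ A : ℕ → ℝ, Feasible m e l t A →
      (∀ i, 2 ≤ i → i ≤ m → A i - A (i - 1) = Bl i - Bl (i - 1)) →
      (∀ i, 1 ≤ i → i ≤ m → Bl i - δstar ≤ A i ∧ A i ≤ Bl i) ∧
      ∃ δ : ℝ, 0 ≤ δ ∧ δ ≤ δstar ∧
        ∀ i, 1 ≤ i → i ≤ m → A i = Bl i - δ := by
  intro A hA hwait
  -- constant shift
  have hconst : ∀ i, 1 ≤ i → i ≤ m → Bl i - A i = Bl 1 - A 1 := by
    intro i
    induction i with
    | zero => intro h; omega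
    | succ n ih =>
      intro h1 h2
      rcases Nat.eq_or_lt_of_le h1 with h | h
      · simp [← h]
      · have hn1 : 1 ≤ n := by omega
        have h2n : 2 ≤ n + 1 := by omega
        have := hwait (n + 1) h2n h2
        simp only [Nat.add_sub_cancel] at this
        have := ih hn1 (by omega)
        linarith
  set δ := Bl 1 - A 1 with hδdef
  have hδ0 : 0 ≤ δ := by
    have := hBlmax A hA 1 le_rfl hm
    linarith
  have hδstar : δ ≤ δstar := by
    obtain ⟨i, hi1, hi2, hieq⟩ := hδ2
    have h1 := hconst i hi1 hi2
    have h2 := (hA.1 i hi1 hi2).1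
    linarith
  refine ⟨fun i hi1 hi2 => ?_, δ, hδ0, hδstar, fun i hi1 hi2 => by
    have := hconst i hi1 hi2; linarith⟩
  have := hconst i hi1 hi2
  constructor <;> linarith
end
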